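/- arXiv:2603.07371 — 4 statements merged into one kernel-verified Lean document; each statement's English description precedes it below -/
import Mathlib

section
/- Validity of conformal nested testing (Theorem 2). Let H_k denote the null hypothesis that Y_{n+j} = 0 for all 1 ≤ j ≤ k. Suppose the p-values p_1,…,p_N ∈ [0,1] satisfy: (i) monotonicity, p_1 ≥ p_2 ≥ ⋯ ≥ p_N; and (ii) validity, i.e. for each fixed k and each t ∈ [0,1], conditional on the labels {Y_{n+j}}_{j≥1} and on the event that H_k is true, P( p_k ≤ t ) ≤ t. Define the stopping index N̂ := inf{ k : p_k ≤ α } (with N̂ = 0 if p_k > α for all k ≤ N). Then P( max_{1≤j≤N̂} Y_{n+j} = 0 ) ≤ α, where the event is understood to require N̂ ≥ 1 (an empty output N̂ = 0 incurs no error). -/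
open MeasureTheory ProbabilityTheory

/-- **Validity of conformal nested testing (Theorem 2).**
Test points `j = 1, …, N` carry unobserved binary labels `Y j ∈ {0,1}` (`Y j = 1`
meaning a hit).  `H_k` is the null hypothesis that `Y j = 0` for all `1 ≤ j ≤ k`.
Suppose the p-values `p 1, …, p N ∈ [0,1]` satisfy (i) monotonicity
`p 1 ≥ p 2 ≥ ⋯ ≥ p N`, and (ii) validity: for each `k` and `t ∈ [0,1]`,
conditionally on the labels (i.e. on any event `A` measurable w.r.t. the σ-algebra
generated by the labels) and on `H_k` being true, `P(p k ≤ t) ≤ t`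
(stated multiplicatively as `μ({p k ≤ t} ∩ A) ≤ t · μ A` for every σ(Y)-measurable
`A ⊆ {H_k true}`).  With `N̂ := inf {k : p k ≤ α}` (`N̂ = 0` when no `k ≤ N`
qualifies, the infimum of an empty set of naturals), the probability that a
nonempty output is returned (`N̂ ≥ 1`) and contains no hit
(`Y j = 0` for all `1 ≤ j ≤ N̂`) is at most `α`. -/
theorem conformal_nested_testing
    {Ω : Type*} [MeasurableSpace Ω] (μ : Measure Ω) [IsProbabilityMeasure μ]
    (N : ℕ) (hN : 0 < N)
    (Y : ℕ → Ω → Fin 2) (hYm : ∀ j, Measurable (Y j))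
    (p : ℕ → Ω → ℝ) (hpm : ∀ k, Measurable (p k))
    (hp01 : ∀ k ω, 0 ≤ p k ω ∧ p k ω ≤ 1)
    (hmono : ∀ ω, ∀ k, 1 ≤ k → k < N → p (k + 1) ω ≤ p k ω)
    (hvalid : ∀ k, 1 ≤ k → k ≤ N → ∀ t : ℝ, 0 ≤ t → t ≤ 1 →
      ∀ A : Set Ω,
        MeasurableSet[MeasurableSpace.comap (fun ω (j : ℕ) => Y j ω)
          MeasurableSpace.pi] A →
        (∀ ω ∈ A, ∀ j, 1 ≤ j → j ≤ k → Y j ω = 0) →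
        μ ({ω | p k ω ≤ t} ∩ A) ≤ ENNReal.ofReal t * μ A)
    (α : ℝ) (hα0 : 0 < α) (hα1 : α < 1) :
    μ {ω | 1 ≤ sInf {k | 1 ≤ k ∧ k ≤ N ∧ p k ω ≤ α}
          ∧ ∀ j, 1 ≤ j → j ≤ sInf {k | 1 ≤ k ∧ k ≤ N ∧ p k ω ≤ α} → Y j ω = 0}
      ≤ ENNReal.ofReal α := by
  classical
  -- monotonicity over ranges
  have hmono2 : ∀ ω a b, 1 ≤ a → a ≤ b → b ≤ N → p b ω ≤ p a ω := by
    intro ω a b ha hab hbN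
    induction b, hab using Nat.le_induction with
    | base => exact le_rfl
    | succ m hm ih =>
      have hmN : m < N := Nat.lt_of_succ_le hbN
      exact le_trans (hmono ω m (le_trans ha hm) hmN) (ih (le_of_lt hmN))
  set A : ℕ → Set Ω := fun k =>
    {ω | (∀ j, 1 ≤ j → j ≤ k → Y j ω = 0) ∧ (k = N ∨ Y (k+1) ω = 1)} with hA
  -- A k is comap-measurable
  have hAcomap : ∀ k, MeasurableSet[MeasurableSpace.comap
      (fun ω (j : ℕ) => Y j ω) MeasurableSpace.pi] (A k) := by
    intro k
    have h1 : MeasurableSet {f : ℕ → Fin 2 | ∀ j, 1 ≤ j → j ≤ k → f j = 0} := by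
      have he : {f : ℕ → Fin 2 | ∀ j, 1 ≤ j → j ≤ k → f j = 0}
          = ⋂ j ∈ Set.Icc 1 k, (fun f : ℕ → Fin 2 => f j) ⁻¹' {0} := by
        ext f; simp [Set.mem_Icc, and_imp]
      rw [he]
      exact MeasurableSet.biInter (Set.to_countable _)
        (fun j _ => (measurable_pi_apply j) (measurableSet_singleton 0))
    have h2 : MeasurableSet {f : ℕ → Fin 2 | k = N ∨ f (k+1) = 1} := by
      rcases eq_or_ne k N with h | h
      · have he : {f : ℕ → Fin 2 | k = N ∨ f (k+1) = 1} = Set.univ := by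
          ext f; simp [h]
        rw [he]; exact MeasurableSet.univ
      · have he : {f : ℕ → Fin 2 | k = N ∨ f (k+1) = 1}
            = (fun f : ℕ → Fin 2 => f (k+1)) ⁻¹' {1} := by
          ext f; simp [h]
        rw [he]
        exact (measurable_pi_apply (k+1)) (measurableSet_singleton 1)
    exact ⟨_, h1.inter h2, rfl⟩
  have hYlam : Measurable (fun ω (j : ℕ) => Y j ω) :=
    measurable_pi_lambda _ (fun j => hYm j)
  have hAm : ∀ k, MeasurableSet (A k) := by
    intro k
    obtain ⟨B, hB, hBA⟩ := hAcomap k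
    rw [← hBA]; exact hYlam hB
  -- the A k are pairwise disjoint on [1, N]
  have hdisj : ∀ k ∈ Finset.Icc 1 N, ∀ l ∈ Finset.Icc 1 N, k ≠ l →
      Disjoint (A k) (A l) := by
    have key : ∀ k l, k < l → l ≤ N → Disjoint (A k) (A l) := by
      intro k l hkl hlN
      rw [Set.disjoint_left]
      rintro ω ⟨_, hk2⟩ ⟨hl1, _⟩
      have hkN : k ≠ N := by omega
      have h1 : Y (k+1) ω = 1 := hk2.resolve_left hkN
      have h0 : Y (k+1) ω = 0 := hl1 (k+1) (by omega) (by omega)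
      rw [h0] at h1; exact absurd h1 (by decide)
    intro k hk l hl hne
    simp only [Finset.mem_Icc] at hk hl
    rcases lt_or_gt_of_ne hne with h | h
    · exact key k l h hl.2
    · exact (key l k h hk.2).symm
  -- main event ⊆ union of (p k ≤ α) ∩ A k
  have hsub : {ω | 1 ≤ sInf {k | 1 ≤ k ∧ k ≤ N ∧ p k ω ≤ α}
        ∧ ∀ j, 1 ≤ j → j ≤ sInf {k | 1 ≤ k ∧ k ≤ N ∧ p k ω ≤ α} → Y j ω = 0}
      ⊆ ⋃ k ∈ Finset.Icc 1 N, ({ω | p k ω ≤ α} ∩ A k) := by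
    intro ω ⟨h1, h0⟩
    set S := {k | 1 ≤ k ∧ k ≤ N ∧ p k ω ≤ α} with hS
    have hSne : S.Nonempty := by
      by_contra h
      rw [Set.not_nonempty_iff_eq_empty] at h
      rw [h, Nat.sInf_empty] at h1; omega
    have hmem : sInf S ∈ S := Nat.sInf_mem hSne
    obtain ⟨hi1, hiN, hip⟩ := hmem
    -- consider T, set of m ≤ N with all-zero labels up to m
    set T := {m | m ≤ N ∧ ∀ j, 1 ≤ j → j ≤ m → Y j ω = 0} with hT
    have hTne : T.Nonempty := ⟨sInf S, hiN, h0⟩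
    have hTbdd : BddAbove T := ⟨N, fun m hm => hm.1⟩
    set K := sSup T with hK
    have hKT : K ∈ T := Nat.sSup_mem hTne hTbdd
    have hKge : sInf S ≤ K := le_csSup hTbdd ⟨hiN, h0⟩
    have hK1 : 1 ≤ K := le_trans hi1 hKge
    have hKN : K ≤ N := hKT.1
    have hpK : p K ω ≤ α :=
      le_trans (hmono2 ω (sInf S) K hi1 hKge hKN) hip
    have hKmax : K = N ∨ Y (K+1) ω = 1 := by
      rcases eq_or_ne K N with h | h
      · exact Or.inl h
      · right
        have hKsN : K + 1 ≤ N := by omega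
        have hnot : K + 1 ∉ T := fun hmem' => by
          have := le_csSup hTbdd hmem'; omega
        rw [hT] at hnot
        simp only [Set.mem_setOf_eq, not_and, not_forall] at hnot
        obtain ⟨j, hj1, hjK, hjY⟩ := hnot hKsN
        have : j = K + 1 := by
          by_contra hne
          exact hjY (hKT.2 j hj1 (by omega))
        rw [this] at hjY
        have h2 : ∀ x : Fin 2, x ≠ 0 → x = 1 := by decide
        exact h2 _ hjY
    refine Set.mem_biUnion (Finset.mem_Icc.mpr ⟨hK1, hKN⟩) ⟨hpK, hKT.2, hKmax⟩
  -- conclude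
  calc μ {ω | 1 ≤ sInf {k | 1 ≤ k ∧ k ≤ N ∧ p k ω ≤ α}
        ∧ ∀ j, 1 ≤ j → j ≤ sInf {k | 1 ≤ k ∧ k ≤ N ∧ p k ω ≤ α} → Y j ω = 0}
      ≤ μ (⋃ k ∈ Finset.Icc 1 N, ({ω | p k ω ≤ α} ∩ A k)) := measure_mono hsub
    _ ≤ ∑ k ∈ Finset.Icc 1 N, μ ({ω | p k ω ≤ α} ∩ A k) :=
        measure_biUnion_finset_le _ _
    _ ≤ ∑ k ∈ Finset.Icc 1 N, ENNReal.ofReal α * μ (A k) := by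
        refine Finset.sum_le_sum fun k hk => ?_
        rw [Finset.mem_Icc] at hk
        exact hvalid k hk.1 hk.2 α hα0.le hα1.le (A k) (hAcomap k)
          (fun ω hω => hω.1)
    _ = ENNReal.ofReal α * ∑ k ∈ Finset.Icc 1 N, μ (A k) := by
        rw [Finset.mul_sum]
    _ = ENNReal.ofReal α * μ (⋃ k ∈ Finset.Icc 1 N, A k) := by
        rw [measure_biUnion_finset hdisj (fun k _ => hAm k)]
    _ ≤ ENNReal.ofReal α * 1 := by
        gcongr
        exact prob_le_one
    _ = ENNReal.ofReal α := mul_one _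
end

section
/- Superuniformity of the weighted rank statistic (core finite claim underlying Theorems 1 and B.1). Let S be a nonempty finite set, w: S → [0,∞) with Σ_{s∈S} w(s) > 0, and V: S → ℝ. Define p(s) := [Σ_{s'∈S} w(s') · 1{V(s') ≥ V(s)}] / [Σ_{s'∈S} w(s')]. If Ŝ is a random element of S with P(Ŝ = s) = w(s) / Σ_{s'∈S} w(s') for every s ∈ S, then for every t ∈ [0,1], P( p(Ŝ) ≤ t ) ≤ t. -/
/-!
Let `A` be the set of outcomes whose weighted rank is at most `t`. If `A` is nonempty, pick
`s₀ ∈ A` with the smallest score: every `s ∈ A` then scores at least `V s₀`, so the total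
weight of `A` is at most the weighted upper-tail mass of `s₀`, which is at most `t` times the
total weight because `s₀ ∈ A`. Hence `P(Ŝ ∈ A) ≤ t`.
-/

open MeasureTheory
open scoped Classical

section WeightedRank

variable {S β : Type*} [Fintype S] [LinearOrder β] (w : S → ℝ) (V : S → β)

noncomputable def upperTailMass (s : S) : ℝ :=
  ∑ s' with V s ≤ V s', w s'

noncomputable def weightedRank (s : S) : ℝ :=
  upperTailMass w V s / ∑ s', w s'

variable {w V}

theorem sum_le_upperTailMass {A : Finset S} {s₀ : S} (hw : ∀ s, 0 ≤ w s)
    (hmin : ∀ s ∈ A, V s₀ ≤ V s) :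
    ∑ s ∈ A, w s ≤ upperTailMass w V s₀ :=
  Finset.sum_le_sum_of_subset_of_nonneg
    (fun s hs => Finset.mem_filter.mpr ⟨Finset.mem_univ s, hmin s hs⟩)
    (fun s _ _ => hw s)

theorem sum_le_of_upperTailMass_le (hw : ∀ s, 0 ≤ w s) {c : ℝ} (hc : 0 ≤ c) :
    ∑ s with upperTailMass w V s ≤ c, w s ≤ c := by
  set A := Finset.univ.filter fun s => upperTailMass w V s ≤ c
  rcases A.eq_empty_or_nonempty with hA | hA
  · simpa [hA] using hc
  obtain ⟨s₀, hs₀A, hs₀min⟩ := A.exists_min_image V hA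
  calc ∑ s ∈ A, w s ≤ upperTailMass w V s₀ := sum_le_upperTailMass hw hs₀min
    _ ≤ c := (Finset.mem_filter.mp hs₀A).2

theorem sum_div_le_of_weightedRank_le (hw : ∀ s, 0 ≤ w s) (hpos : 0 < ∑ s, w s)
    {t : ℝ} (ht : 0 ≤ t) :
    ∑ s with weightedRank w V s ≤ t, w s / ∑ s', w s' ≤ t := by
  have hA : (Finset.univ.filter fun s => weightedRank w V s ≤ t) =
      Finset.univ.filter fun s => upperTailMass w V s ≤ t * ∑ s', w s' :=
    Finset.filter_congr fun s _ => div_le_iff₀ hpos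
  rw [← Finset.sum_div, div_le_iff₀ hpos, hA]
  exact sum_le_of_upperTailMass_le hw (mul_nonneg ht hpos.le)

end WeightedRank

theorem measure_preimage_le_ofReal_sum {Ω S : Type*} [MeasurableSpace Ω] {μ : Measure Ω}
    {X : Ω → S} {q : S → ℝ} (hq : ∀ s, 0 ≤ q s)
    (hlaw : ∀ s, μ {ω | X ω = s} = ENNReal.ofReal (q s)) (A : Finset S) :
    μ (X ⁻¹' A) ≤ ENNReal.ofReal (∑ s ∈ A, q s) := by
  have hcover : X ⁻¹' A = ⋃ s ∈ A, {ω | X ω = s} := by ext ω; simp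
  calc μ (X ⁻¹' A) ≤ ∑ s ∈ A, μ {ω | X ω = s} :=
        hcover ▸ measure_biUnion_finset_le A _
    _ = ENNReal.ofReal (∑ s ∈ A, q s) := by
      simp only [hlaw, ENNReal.ofReal_sum_of_nonneg fun s _ => hq s]

theorem weighted_rank_superuniform_general
    {Ω S : Type*} [MeasurableSpace Ω] [Fintype S]
    (μ : Measure Ω)
    (w : S → ℝ) (hw : ∀ s, 0 ≤ w s) (hpos : 0 < ∑ s, w s)
    (V : S → ℝ)
    (Shat : Ω → S)
    (hlaw : ∀ s : S, μ {ω | Shat ω = s} = ENNReal.ofReal (w s / ∑ s', w s'))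
    (t : ℝ) (ht0 : 0 ≤ t) :
    μ {ω | (∑ s', w s' * (if V (Shat ω) ≤ V s' then 1 else 0)) / (∑ s', w s') ≤ t}
      ≤ ENNReal.ofReal t := by
  have hevent :
      {ω | (∑ s', w s' * (if V (Shat ω) ≤ V s' then 1 else 0)) / (∑ s', w s') ≤ t} =
        Shat ⁻¹' ↑(Finset.univ.filter fun s => weightedRank w V s ≤ t) := by
    ext ω
    simp [weightedRank, upperTailMass, Finset.sum_filter]
  rw [hevent]
  calc _ ≤ ENNReal.ofReal (∑ s with weightedRank w V s ≤ t, w s / ∑ s', w s') :=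
        measure_preimage_le_ofReal_sum (fun s => div_nonneg (hw s) hpos.le) hlaw _
    _ ≤ ENNReal.ofReal t :=
        ENNReal.ofReal_le_ofReal (sum_div_le_of_weightedRank_le hw hpos ht0)

/-- **Superuniformity of the weighted rank statistic.**
`S` is a nonempty finite set, `w : S → [0,∞)` a weight function with positive total
mass, `V : S → ℝ` a score function, and `Shat` a random element of `S` whose law is
the `w`-weighted distribution.  Then the weighted upper-tail rank
`p(Shat) = (∑_{s'} w s' · 1{V s' ≥ V (Shat)}) / (∑_{s'} w s')`
is stochastically larger than uniform: `P(p(Shat) ≤ t) ≤ t` for all `t ∈ [0,1]`. -/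
theorem weighted_rank_superuniform
    {Ω S : Type*} [MeasurableSpace Ω] [Fintype S] [Nonempty S]
    (μ : Measure Ω) [IsProbabilityMeasure μ]
    (w : S → ℝ) (hw : ∀ s, 0 ≤ w s) (hpos : 0 < ∑ s, w s)
    (V : S → ℝ)
    (Shat : Ω → S)
    (hlaw : ∀ s : S, μ {ω | Shat ω = s} = ENNReal.ofReal (w s / ∑ s', w s'))
    (t : ℝ) (ht0 : 0 ≤ t) (ht1 : t ≤ 1) :
    μ {ω | (∑ s', w s' * (if V (Shat ω) ≤ V s' then 1 else 0)) / (∑ s', w s') ≤ t}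
      ≤ ENNReal.ofReal t :=
  weighted_rank_superuniform_general μ w hw hpos V Shat hlaw t ht0
end

section
/- Conditional law of the data permutation given the unordered collection (proof step of Theorem 1). In the setting where π̂ has law proportional to u on the finite permutation group Π and π̂^{(0)} = π̂, π̂^{(b)} = π̂ ∘ π^{(b)} with π^{(1)},…,π^{(B)} i.i.d. uniform on Π independent of π̂: for any distinct fixed π_0,…,π_B ∈ Π, conditional on the event that the unordered multiset [π̂^{(0)}, π̂^{(1)}, …, π̂^{(B)}] equals [π_0, …, π_B], one has, for every permutation σ of {0,1,…,B}, P( (π̂^{(0)},…,π̂^{(B)}) = (π_{σ(0)},…,π_{σ(B)}) | · ) = u(π_{σ(0)}) / Σ_{σ'∈Π̃} u(π_{σ'(0)}), where Π̃ is the set of all permutations of {0,…,B}; in particular, for each b ∈ {0,…,B}, P( π̂^{(0)} = π_b | [π̂^{(0)},…,π̂^{(B)}] = [π_0,…,π_B] ) = u(π_b) / Σ_{b'=0}^B u(π_{b'}). -/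
open MeasureTheory ProbabilityTheory
open scoped Classical

/-- Permutations of a finite index set carry the discrete (⊤) σ-algebra. -/
instance instMeasurableSpacePerm (α : Type*) : MeasurableSpace (Equiv.Perm α) := ⊤

instance instMeasurableSingletonClassPerm (α : Type*) :
    MeasurableSingletonClass (Equiv.Perm α) :=
  ⟨fun _ => MeasurableSpace.measurableSet_top⟩

/-!
Since `π₀, …, π_B` are distinct, the event `[π̂⁽⁰⁾, …, π̂⁽ᴮ⁾] = [π₀, …, π_B]` is the disjoint
union over `σ ∈ Π̃` of the events `{π̂⁽ᵇ⁾ = π_{σ b} for all b}`. Undoing the shifts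
`π̂⁽ᵇ⁾ = π̂ ∘ π⁽ᵇ⁾`, the `σ`-th event reads `{π̂ = π_{σ 0}, π⁽ᵇ⁾ = π_{σ 0}⁻¹ ∘ π_{σ b}}`, so by
independence it has probability `u (π_{σ 0}) / ∑ u · |Π|^{-B}`. The uniform factor `|Π|^{-B}`
does not depend on `σ` and cancels upon conditioning. For the marginal of `π̂⁽⁰⁾`, every `b` is
`σ 0` for equally many `σ ∈ Π̃`.
-/

open Finset Function
open scoped ENNReal

theorem Multiset.map_univ_eq_map_univ_iff_exists_perm {α β : Type*} [Fintype α] {f h : α → β}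
    (hh : Injective h) :
    univ.val.map f = univ.val.map h ↔ ∃ σ : Equiv.Perm α, f = h ∘ σ := by
  constructor
  · intro heq
    have hf : Injective f := by
      have hnd : (univ.val.map f).Nodup := heq ▸ univ.nodup.map hh
      exact fun x y hxy => Multiset.inj_on_of_nodup_map hnd x (mem_univ x) y (mem_univ y) hxy
    have hrange : ∀ a, ∃ x, h x = f a := fun a => by
      simpa [heq] using Multiset.mem_map_of_mem f (mem_univ_val a)
    choose k hk using hrange
    have hk_inj : Injective k := fun x y hxy => hf (by rw [← hk x, ← hk y, hxy])
    exact ⟨Equiv.ofBijective k hk_inj.bijective_of_finite, funext fun a => (hk a).symm⟩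
  · rintro ⟨σ, rfl⟩
    rw [← Multiset.map_map, Multiset.map_univ_val_equiv]

theorem Equiv.Perm.card_filter_apply_eq {α : Type*} [Fintype α] [DecidableEq α] (a b : α) :
    #{σ : Equiv.Perm α | σ a = b} = #{σ : Equiv.Perm α | σ a = a} := by
  refine card_bij' (fun σ _ => Equiv.swap a b * σ) (fun σ _ => Equiv.swap a b * σ) ?_ ?_ ?_ ?_ <;>
    simp +contextual [← mul_assoc]

theorem Equiv.Perm.sum_filter_apply_div_sum {α K : Type*} [Fintype α] [DecidableEq α]
    [Semifield K] [CharZero K] (f : α → K) (a b : α) :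
    (∑ σ : Equiv.Perm α with σ a = b, f (σ a)) / ∑ σ : Equiv.Perm α, f (σ a)
      = f b / ∑ x, f x := by
  set N : K := Nat.cast #{σ : Equiv.Perm α | σ a = a}
  have hfiber : ∀ x, ∑ σ : Equiv.Perm α with σ a = x, f (σ a) = N * f x := fun x => by
    rw [sum_congr rfl fun σ hσ => congrArg f (mem_filter.1 hσ).2, sum_const,
      card_filter_apply_eq, nsmul_eq_mul]
  have hN : N ≠ 0 :=
    Nat.cast_ne_zero.2 (card_ne_zero_of_mem (s := {σ : Equiv.Perm α | σ a = a}) (a := 1) (by simp))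
  rw [hfiber, ← sum_fiberwise univ (fun σ : Equiv.Perm α => σ a),
    sum_congr rfl fun x _ => hfiber x, ← mul_sum, mul_div_mul_left _ _ hN]

section

variable {Ω α β : Type*} (X : Ω → α → β) {g : α → β}

theorem setOf_map_univ_eq_map_univ_eq_iUnion [Fintype α] (hg : Injective g) :
    {ω | univ.val.map (X ω) = univ.val.map g}
      = ⋃ σ : Equiv.Perm α, {ω | ∀ a, X ω a = g (σ a)} := by
  ext ω
  rw [Set.mem_ofPred_eq, Multiset.map_univ_eq_map_univ_iff_exists_perm hg, Set.mem_iUnion]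
  exact exists_congr fun σ => funext_iff

theorem pairwise_disjoint_setOf_forall_eq_comp_perm (hg : Injective g) :
    Pairwise (Disjoint on fun σ : Equiv.Perm α => {ω | ∀ a, X ω a = g (σ a)}) :=
  fun _ _ hne => Set.disjoint_left.2 fun _ h h' =>
    hne (Equiv.ext fun a => hg ((h a).symm.trans (h' a)))

theorem iUnion_setOf_forall_eq_comp_perm_inter_setOf_apply_eq [Fintype α] [DecidableEq α]
    (hg : Injective g) (a b : α) :
    (⋃ σ : Equiv.Perm α, {ω | ∀ a, X ω a = g (σ a)}) ∩ {ω | X ω a = g b}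
      = ⋃ σ ∈ univ.filter (fun σ : Equiv.Perm α => σ a = b), {ω | ∀ a, X ω a = g (σ a)} := by
  ext ω
  simp only [Set.mem_inter_iff, Set.mem_iUnion, mem_filter, mem_univ, true_and, exists_prop,
    Set.mem_ofPred_eq]
  constructor
  · rintro ⟨⟨σ, hσ⟩, hb⟩
    exact ⟨σ, hg ((hσ a).symm.trans hb), hσ⟩
  · rintro ⟨σ, rfl, hσ⟩
    exact ⟨⟨σ, hσ⟩, hσ a⟩

end

theorem ENNReal.ofReal_div_ofReal_of_le {x y : ℝ} (hx : 0 ≤ x) (hxy : x ≤ y) :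
    ENNReal.ofReal x / ENNReal.ofReal y = ENNReal.ofReal (x / y) := by
  rcases (hx.trans hxy).eq_or_lt' with rfl | hy
  · simp [le_antisymm hxy hx]
  · exact (ENNReal.ofReal_div_of_pos hy).symm

theorem ENNReal.sum_ofReal_mul_div_sum_ofReal_mul {κ : Type*} [Fintype κ] {a : κ → ℝ}
    (ha : ∀ i, 0 ≤ a i) {k : ℝ≥0∞} (hk₀ : k ≠ 0) (hk : k ≠ ∞) (P : Finset κ) :
    (∑ i ∈ P, ENNReal.ofReal (a i) * k) / ∑ i, ENNReal.ofReal (a i) * k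
      = ENNReal.ofReal ((∑ i ∈ P, a i) / ∑ i, a i) := by
  rw [← sum_mul, ← sum_mul, ENNReal.mul_div_mul_right _ _ hk₀ hk,
    ← ENNReal.ofReal_sum_of_nonneg fun i _ => ha i, ← ENNReal.ofReal_sum_of_nonneg fun i _ => ha i]
  exact ENNReal.ofReal_div_ofReal_of_le (sum_nonneg fun i _ => ha i)
    (sum_le_sum_of_subset_of_nonneg (subset_univ P) fun i _ _ => ha i)

section

variable {Ω : Type*} [MeasurableSpace Ω] {μ : Measure Ω}

theorem ProbabilityTheory.cond_iUnion_eq_sum_div_sum {κ : Type*} [Fintype κ] {E : κ → Set Ω}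
    (hE : ∀ i, MeasurableSet (E i)) (hdisj : Pairwise (Disjoint on E))
    (P : Finset κ) {s : Set Ω} (hs : (⋃ i, E i) ∩ s = ⋃ i ∈ P, E i) :
    μ[s | ⋃ i, E i] = (∑ i ∈ P, μ (E i)) / ∑ i, μ (E i) := by
  rw [cond_apply (MeasurableSet.iUnion hE), hs,
    measure_biUnion_finset (hdisj.set_pairwise _) fun i _ => hE i, measure_iUnion hdisj hE,
    tsum_fintype, div_eq_mul_inv, mul_comm]

theorem ProbabilityTheory.cond_iUnion_eq_ofReal_sum_div_sum {κ : Type*} [Fintype κ]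
    {E : κ → Set Ω} (hE : ∀ i, MeasurableSet (E i)) (hdisj : Pairwise (Disjoint on E))
    {a : κ → ℝ} (ha : ∀ i, 0 ≤ a i) {k : ℝ≥0∞} (hk₀ : k ≠ 0) (hk : k ≠ ∞)
    (hμE : ∀ i, μ (E i) = ENNReal.ofReal (a i) * k)
    (P : Finset κ) {s : Set Ω} (hs : (⋃ i, E i) ∩ s = ⋃ i ∈ P, E i) :
    μ[s | ⋃ i, E i] = ENNReal.ofReal ((∑ i ∈ P, a i) / ∑ i, a i) := by
  simp only [cond_iUnion_eq_sum_div_sum hE hdisj P hs, hμE]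
  exact ENNReal.sum_ofReal_mul_div_sum_ofReal_mul ha hk₀ hk P

theorem measurableSet_setOf_forall_eq {κ : Type*} [Countable κ] {β : κ → Type*}
    [∀ i, MeasurableSpace (β i)] [∀ i, MeasurableSingletonClass (β i)] {f : ∀ i, Ω → β i}
    (hf : ∀ i, Measurable (f i)) (x : ∀ i, β i) : MeasurableSet {ω | ∀ i, f i ω = x i} := by
  rw [Set.ofPred_forall]
  exact MeasurableSet.iInter fun i => hf i (measurableSet_singleton (x i))

theorem ProbabilityTheory.iIndepFun.measure_setOf_forall_eq {κ : Type*} [Fintype κ]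
    {β : κ → Type*} [∀ i, MeasurableSpace (β i)] [∀ i, MeasurableSingletonClass (β i)]
    {f : ∀ i, Ω → β i} (h : iIndepFun f μ) (x : ∀ i, β i) :
    μ {ω | ∀ i, f i ω = x i} = ∏ i, μ {ω | f i ω = x i} := by
  have := h.measure_inter_preimage_eq_mul univ (sets := fun i => {x i})
    fun i _ => measurableSet_singleton (x i)
  simp only [mem_univ, Set.iInter_true] at this
  rwa [Set.ofPred_forall]

end

section

variable {Ω G : Type*} [Group G] {n : ℕ} (Y₀ : Ω → G) (Y : Fin n → Ω → G)

theorem setOf_forall_cons_mul_eq (x : Fin (n + 1) → G) :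
    {ω | ∀ i, (Fin.cons (Y₀ ω) (fun b => Y₀ ω * Y b ω) : Fin (n + 1) → G) i = x i}
      = {ω | ∀ i, (Fin.cons Y₀ Y : Fin (n + 1) → Ω → G) i ω
          = (Fin.cons (x 0) (fun b => (x 0)⁻¹ * x b.succ) : Fin (n + 1) → G) i} := by
  ext ω
  simp only [Set.mem_ofPred_eq, Fin.forall_fin_succ, Fin.cons_zero, Fin.cons_succ]
  exact and_congr_right fun h => by simp only [h, eq_inv_mul_iff_mul_eq]

variable [MeasurableSpace Ω] [MeasurableSpace G] [MeasurableSingletonClass G] {μ : Measure Ω}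

theorem measurableSet_setOf_forall_cons_mul_eq (hY₀ : Measurable Y₀) (hY : ∀ b, Measurable (Y b))
    (x : Fin (n + 1) → G) :
    MeasurableSet
      {ω | ∀ i, (Fin.cons (Y₀ ω) (fun b => Y₀ ω * Y b ω) : Fin (n + 1) → G) i = x i} := by
  rw [setOf_forall_cons_mul_eq]
  exact measurableSet_setOf_forall_eq (Fin.cases hY₀ hY) _

theorem measure_setOf_forall_cons_mul_eq
    (hindep : iIndepFun (Fin.cons Y₀ Y : Fin (n + 1) → Ω → G) μ) (x : Fin (n + 1) → G) :
    μ {ω | ∀ i, (Fin.cons (Y₀ ω) (fun b => Y₀ ω * Y b ω) : Fin (n + 1) → G) i = x i}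
      = μ {ω | Y₀ ω = x 0} * ∏ b, μ {ω | Y b ω = (x 0)⁻¹ * x b.succ} := by
  rw [setOf_forall_cons_mul_eq, hindep.measure_setOf_forall_eq, Fin.prod_univ_succ]
  simp only [Fin.cons_zero, Fin.cons_succ]

end

theorem conditional_law_given_unordered_collection_general
    {Ω ι : Type*} [MeasurableSpace Ω] [Fintype ι] [DecidableEq ι]
    (μ : Measure Ω)
    (u : Equiv.Perm ι → ℝ) (hu : ∀ π, 0 ≤ u π) (hupos : 0 < ∑ π, u π)
    (B : ℕ)
    (πhat : Ω → Equiv.Perm ι) (πs : Fin B → Ω → Equiv.Perm ι)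
    (hπhatm : Measurable πhat) (hπsm : ∀ b, Measurable (πs b))
    (hπhat : ∀ π : Equiv.Perm ι,
      μ {ω | πhat ω = π} = ENNReal.ofReal (u π / ∑ π', u π'))
    (hπs : ∀ (b : Fin B) (π : Equiv.Perm ι),
      μ {ω | πs b ω = π} = (Fintype.card (Equiv.Perm ι) : ENNReal)⁻¹)
    (hindep : iIndepFun (m := fun _ => inferInstance)
      (Fin.cons πhat πs : Fin (B + 1) → Ω → Equiv.Perm ι) μ)
    (g : Fin (B + 1) → Equiv.Perm ι) (hg : Function.Injective g) :
    (∀ σ : Equiv.Perm (Fin (B + 1)),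
      ProbabilityTheory.cond μ
          {ω | (Finset.univ.val.map fun b : Fin (B + 1) =>
                  (Fin.cons (πhat ω) (fun b' : Fin B => πhat ω * πs b' ω)
                    : Fin (B + 1) → Equiv.Perm ι) b)
              = Finset.univ.val.map g}
          {ω | ∀ b : Fin (B + 1),
              (Fin.cons (πhat ω) (fun b' : Fin B => πhat ω * πs b' ω)
                  : Fin (B + 1) → Equiv.Perm ι) b = g (σ b)}
        = ENNReal.ofReal
            (u (g (σ 0)) / ∑ σ' : Equiv.Perm (Fin (B + 1)), u (g (σ' 0))))
    ∧ (∀ b : Fin (B + 1),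
      ProbabilityTheory.cond μ
          {ω | (Finset.univ.val.map fun b : Fin (B + 1) =>
                  (Fin.cons (πhat ω) (fun b' : Fin B => πhat ω * πs b' ω)
                    : Fin (B + 1) → Equiv.Perm ι) b)
              = Finset.univ.val.map g}
          {ω | πhat ω = g b}
        = ENNReal.ofReal (u (g b) / ∑ b' : Fin (B + 1), u (g b'))) := by
  eta_reduce
  set E : Equiv.Perm (Fin (B + 1)) → Set Ω := fun σ =>
    {ω | ∀ b, (Fin.cons (πhat ω) fun b' => πhat ω * πs b' ω : Fin (B + 1) → Equiv.Perm ι) b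
      = g (σ b)}
  set k : ℝ≥0∞ := ENNReal.ofReal (∑ π, u π)⁻¹ * (Fintype.card (Equiv.Perm ι) : ℝ≥0∞)⁻¹ ^ B
  have hμE : ∀ σ, μ (E σ) = ENNReal.ofReal (u (g (σ 0))) * k := fun σ => by
    rw [measure_setOf_forall_cons_mul_eq πhat πs hindep, hπhat, prod_congr rfl fun b _ => hπs b _,
      prod_const, card_univ, Fintype.card_fin, div_eq_mul_inv, ENNReal.ofReal_mul (hu _), mul_assoc]
  have hk₀ : k ≠ 0 := by simp [k, hupos]
  have hk : k ≠ ∞ := ENNReal.mul_ne_top ENNReal.ofReal_ne_top (by simp)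
  have hcond := cond_iUnion_eq_ofReal_sum_div_sum
    (fun σ => measurableSet_setOf_forall_cons_mul_eq πhat πs hπhatm hπsm _)
    (pairwise_disjoint_setOf_forall_eq_comp_perm _ hg) (fun σ => hu _) hk₀ hk hμE
  rw [setOf_map_univ_eq_map_univ_eq_iUnion _ hg]
  refine ⟨fun σ => (hcond {σ} ?_).trans (by rw [sum_singleton]), fun b =>
    (hcond _ (iUnion_setOf_forall_eq_comp_perm_inter_setOf_apply_eq _ hg 0 b)).trans
      (by rw [Equiv.Perm.sum_filter_apply_div_sum (fun b => u (g b))])⟩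
  simpa using Set.subset_iUnion E σ

/-- **Conditional law of the data permutation given the unordered collection**
(proof step of Theorem 1).  `π̂` has law proportional to `u` on the finite
permutation group `Π`, and `π̂⁽⁰⁾ := π̂`, `π̂⁽ᵇ⁾ := π̂ ∘ π⁽ᵇ⁾` with `π⁽¹⁾, …, π⁽ᴮ⁾`
i.i.d. uniform on `Π` independent of `π̂`.  For distinct fixed `π₀, …, π_B ∈ Π`
(encoded as an injective `g : Fin (B+1) → Π`), conditional on the unordered
multiset `[π̂⁽⁰⁾, …, π̂⁽ᴮ⁾]` equalling `[π₀, …, π_B]`: for every permutation `σ` of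
`{0, …, B}`, `P((π̂⁽⁰⁾, …, π̂⁽ᴮ⁾) = (π_{σ 0}, …, π_{σ B}) | ·)
 = u (π_{σ 0}) / ∑_{σ' ∈ Π̃} u (π_{σ' 0})`, and in particular for each `b`,
`P(π̂⁽⁰⁾ = π_b | ·) = u (π_b) / ∑_{b'} u (π_{b'})`. -/
theorem conditional_law_given_unordered_collection
    {Ω ι : Type*} [MeasurableSpace Ω] [Fintype ι] [DecidableEq ι]
    (μ : Measure Ω) [IsProbabilityMeasure μ]
    (u : Equiv.Perm ι → ℝ) (hu : ∀ π, 0 ≤ u π) (hupos : 0 < ∑ π, u π)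
    (B : ℕ)
    (πhat : Ω → Equiv.Perm ι) (πs : Fin B → Ω → Equiv.Perm ι)
    (hπhatm : Measurable πhat) (hπsm : ∀ b, Measurable (πs b))
    (hπhat : ∀ π : Equiv.Perm ι,
      μ {ω | πhat ω = π} = ENNReal.ofReal (u π / ∑ π', u π'))
    (hπs : ∀ (b : Fin B) (π : Equiv.Perm ι),
      μ {ω | πs b ω = π} = (Fintype.card (Equiv.Perm ι) : ENNReal)⁻¹)
    (hindep : iIndepFun (m := fun _ => inferInstance)
      (Fin.cons πhat πs : Fin (B + 1) → Ω → Equiv.Perm ι) μ)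
    (g : Fin (B + 1) → Equiv.Perm ι) (hg : Function.Injective g) :
    (∀ σ : Equiv.Perm (Fin (B + 1)),
      ProbabilityTheory.cond μ
          {ω | (Finset.univ.val.map fun b : Fin (B + 1) =>
                  (Fin.cons (πhat ω) (fun b' : Fin B => πhat ω * πs b' ω)
                    : Fin (B + 1) → Equiv.Perm ι) b)
              = Finset.univ.val.map g}
          {ω | ∀ b : Fin (B + 1),
              (Fin.cons (πhat ω) (fun b' : Fin B => πhat ω * πs b' ω)
                  : Fin (B + 1) → Equiv.Perm ι) b = g (σ b)}
        = ENNReal.ofReal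
            (u (g (σ 0)) / ∑ σ' : Equiv.Perm (Fin (B + 1)), u (g (σ' 0))))
    ∧ (∀ b : Fin (B + 1),
      ProbabilityTheory.cond μ
          {ω | (Finset.univ.val.map fun b : Fin (B + 1) =>
                  (Fin.cons (πhat ω) (fun b' : Fin B => πhat ω * πs b' ω)
                    : Fin (B + 1) → Equiv.Perm ι) b)
              = Finset.univ.val.map g}
          {ω | πhat ω = g b}
        = ENNReal.ofReal (u (g b) / ∑ b' : Fin (B + 1), u (g b'))) :=
  conditional_law_given_unordered_collection_general μ u hu hupos B πhat πs hπhatm hπsm hπhat hπs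
    hindep g hg
end

section
/- Deterministic weight-perturbation inequality (core algebraic claim in the proof of Theorem 3). Let S be a nonempty finite set, w, ŵ: S → [0,∞) with Σ_{s∈S} w(s) > 0 and Σ_{s∈S} ŵ(s) > 0, V: S → ℝ, and v̂ ∈ ℝ. Define t̂ := [Σ_{s∈S} ŵ(s) 1{V(s) ≥ v̂}] / Σ_{s∈S} ŵ(s), δ⁺(s) := max(ŵ(s) − w(s), 0), and δ⁻(s) := max(w(s) − ŵ(s), 0). Then [Σ_{s∈S} w(s) 1{V(s) ≥ v̂}] / Σ_{s∈S} w(s) − t̂ ≤ [ (1 − t̂) · Σ_{s∈S} δ⁻(s) 1{V(s) ≥ v̂} + t̂ · Σ_{s∈S} δ⁺(s) 1{V(s) < v̂} ] / Σ_{s∈S} w(s). -/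
open Finset

/-! Writing `t̂` for the `ŵ`-weighted fraction, `∑ ŵ s (1{V s ≥ v̂} - t̂) = 0`, so the numerator
`∑ w s 1{V s ≥ v̂} - t̂ ∑ w s` equals `∑ (w s - ŵ s)(1{V s ≥ v̂} - t̂)`. Since `0 ≤ t̂ ≤ 1`, each
summand is at most `(1 - t̂) δ⁻ s` where `V s ≥ v̂` and at most `t̂ δ⁺ s` where `V s < v̂`. -/

theorem sum_mul_div_sum_nonneg {ι : Type*} (s : Finset ι) {u f : ι → ℝ}
    (hu : ∀ i ∈ s, 0 ≤ u i) (hf : ∀ i ∈ s, 0 ≤ f i) :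
    0 ≤ (∑ i ∈ s, u i * f i) / ∑ i ∈ s, u i :=
  div_nonneg (sum_nonneg fun i hi => mul_nonneg (hu i hi) (hf i hi)) (sum_nonneg hu)

theorem sum_mul_div_sum_le_one {ι : Type*} (s : Finset ι) {u f : ι → ℝ}
    (hu : ∀ i ∈ s, 0 ≤ u i) (hf : ∀ i ∈ s, f i ≤ 1) :
    (∑ i ∈ s, u i * f i) / ∑ i ∈ s, u i ≤ 1 :=
  div_le_one_of_le₀
    (sum_le_sum fun i hi => mul_le_of_le_one_right (hu i hi) (hf i hi)) (sum_nonneg hu)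

theorem sum_mul_sub_mean_mul_sum {ι : Type*} (s : Finset ι) (u v f : ι → ℝ)
    (hv : ∑ i ∈ s, v i ≠ 0) :
    ∑ i ∈ s, u i * f i - (∑ i ∈ s, u i) * ((∑ i ∈ s, v i * f i) / ∑ i ∈ s, v i)
      = ∑ i ∈ s, (u i - v i) * (f i - (∑ i ∈ s, v i * f i) / ∑ i ∈ s, v i) := by
  set m := (∑ i ∈ s, v i * f i) / ∑ i ∈ s, v i
  have hm : (∑ i ∈ s, v i) * m = ∑ i ∈ s, v i * f i := mul_div_cancel₀ _ hv
  simp only [sub_mul, mul_sub, sum_sub_distrib, ← sum_mul]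
  rw [hm]
  ring

theorem sub_mul_indicator_sub_le {a b c x t : ℝ} (ht₀ : 0 ≤ t) (ht₁ : t ≤ 1) :
    (a - b) * ((if c ≤ x then 1 else 0) - t)
      ≤ (1 - t) * (max (a - b) 0 * (if c ≤ x then 1 else 0))
        + t * (max (b - a) 0 * (if x < c then 1 else 0)) := by
  rcases le_or_gt c x with h | h
  · simp only [if_pos h, if_neg (not_lt.mpr h), mul_one, mul_zero, add_zero]
    rw [mul_comm]
    exact mul_le_mul_of_nonneg_left (le_max_left _ _) (sub_nonneg.mpr ht₁)
  · simp only [if_neg (not_le.mpr h), if_pos h, mul_one, mul_zero, zero_add, zero_sub, mul_neg,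
      ← neg_mul, neg_sub]
    rw [mul_comm]
    exact mul_le_mul_of_nonneg_left (le_max_left _ _) ht₀

theorem weight_perturbation_inequality_general
    {S : Type*} [Fintype S]
    (w what : S → ℝ) (hwhat : ∀ s, 0 ≤ what s)
    (hwpos : 0 < ∑ s, w s) (hwhatpos : 0 < ∑ s, what s)
    (V : S → ℝ) (vhat : ℝ) :
    (∑ s, w s * (if vhat ≤ V s then 1 else 0)) / (∑ s, w s)
        - (∑ s, what s * (if vhat ≤ V s then 1 else 0)) / (∑ s, what s)
      ≤ ((1 - (∑ s, what s * (if vhat ≤ V s then 1 else 0)) / (∑ s, what s))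
            * (∑ s, max (w s - what s) 0 * (if vhat ≤ V s then 1 else 0))
          + ((∑ s, what s * (if vhat ≤ V s then 1 else 0)) / (∑ s, what s))
            * (∑ s, max (what s - w s) 0 * (if V s < vhat then 1 else 0)))
        / (∑ s, w s) := by
  have ht₀ := sum_mul_div_sum_nonneg univ (fun s _ => hwhat s)
    (f := fun s => if vhat ≤ V s then 1 else 0) fun _ _ => ite_nonneg zero_le_one le_rfl
  have ht₁ := sum_mul_div_sum_le_one univ (fun s _ => hwhat s)
    (f := fun s => if vhat ≤ V s then 1 else 0) fun _ _ => ite_le_one le_rfl zero_le_one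
  set t := (∑ s, what s * (if vhat ≤ V s then 1 else 0)) / ∑ s, what s
  rw [div_sub' hwpos.ne', div_le_div_iff_of_pos_right hwpos]
  calc ∑ s, w s * (if vhat ≤ V s then 1 else 0) - (∑ s, w s) * t
      = ∑ s, (w s - what s) * ((if vhat ≤ V s then 1 else 0) - t) :=
        sum_mul_sub_mean_mul_sum univ w what _ hwhatpos.ne'
    _ ≤ ∑ s, ((1 - t) * (max (w s - what s) 0 * (if vhat ≤ V s then 1 else 0))
          + t * (max (what s - w s) 0 * (if V s < vhat then 1 else 0))) :=
        sum_le_sum fun s _ => sub_mul_indicator_sub_le ht₀ ht₁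
    _ = _ := by rw [sum_add_distrib, ← mul_sum, ← mul_sum]

/-- **Deterministic weight-perturbation inequality** (core algebraic claim in the
proof of Theorem 3).  For a nonempty finite set `S`, nonnegative weights `w, ŵ`
with positive total mass, scores `V : S → ℝ` and a threshold `v̂ ∈ ℝ`, setting
`t̂ := (∑ ŵ s · 1{V s ≥ v̂}) / ∑ ŵ s`, `δ⁺ s := max (ŵ s - w s) 0` and
`δ⁻ s := max (w s - ŵ s) 0`, the difference between the `w`-weighted and the
`ŵ`-weighted fractions of mass at or above `v̂` is bounded by
`((1 - t̂) · ∑ δ⁻ s · 1{V s ≥ v̂} + t̂ · ∑ δ⁺ s · 1{V s < v̂}) / ∑ w s`. -/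
theorem weight_perturbation_inequality
    {S : Type*} [Fintype S] [Nonempty S]
    (w what : S → ℝ) (hw : ∀ s, 0 ≤ w s) (hwhat : ∀ s, 0 ≤ what s)
    (hwpos : 0 < ∑ s, w s) (hwhatpos : 0 < ∑ s, what s)
    (V : S → ℝ) (vhat : ℝ) :
    (∑ s, w s * (if vhat ≤ V s then 1 else 0)) / (∑ s, w s)
        - (∑ s, what s * (if vhat ≤ V s then 1 else 0)) / (∑ s, what s)
      ≤ ((1 - (∑ s, what s * (if vhat ≤ V s then 1 else 0)) / (∑ s, what s))
            * (∑ s, max (w s - what s) 0 * (if vhat ≤ V s then 1 else 0))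
          + ((∑ s, what s * (if vhat ≤ V s then 1 else 0)) / (∑ s, what s))
            * (∑ s, max (what s - w s) 0 * (if V s < vhat then 1 else 0)))
        / (∑ s, w s) :=
  weight_perturbation_inequality_general w what hwhat hwpos hwhatpos V vhat
end
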